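/- arXiv:q-alg/9705006 — 4 statements merged into one kernel-verified Lean document; each statement's English description precedes it below -/
import Mathlib

section
/- The generating function identity Σ_{n=0}^∞ C_n(cos θ; β|q) z^n = (βe^{iθ}z, βe^{−iθ}z; q)_∞ / (e^{iθ}z, e^{−iθ}z; q)_∞ holds for |z| < 1, |q| < 1. -/
/-!
The q-binomial series `F(w) = ∑ (β;q)ₙ/(q;q)ₙ wⁿ` satisfies `(1 - w) F(w) = (1 - βw) F(qw)`.
Iterating gives `F(w) (w;q)_N = (βw;q)_N F(qᴺw)`, and as `N → ∞` we have `F(qᴺw) → F(0) = 1`,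
whence the q-binomial theorem `F(w) = (βw;q)_∞ / (w;q)_∞`. The coefficient of `zⁿ` in the Cauchy
product `F(e^{-iθ}z) F(e^{iθ}z)` is `C_n(cos θ; β|q)`, so the generating function factors into two
q-binomial series.
-/

open Finset

/-- The q-Pochhammer symbol `(a;q)_n`. -/
noncomputable def qPoch (a q : ℂ) (n : ℕ) : ℂ := ∏ j ∈ Finset.range n, (1 - a * q ^ j)

/-- The continuous q-ultraspherical polynomial C_n(cos θ; β | q). -/
noncomputable def qUltra (n : ℕ) (β q θ : ℂ) : ℂ :=
  ∑ k ∈ range (n + 1),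
    qPoch β q k * qPoch β q (n - k) / (qPoch q q k * qPoch q q (n - k)) *
      Complex.exp (Complex.I * ((n : ℂ) - 2 * (k : ℂ)) * θ)

open Filter Topology

/-- `(a;q)_∞`. -/
noncomputable def qPochInf (a q : ℂ) : ℂ := ∏' j : ℕ, (1 - a * q ^ j)

noncomputable def qBinomialCoeff (β q : ℂ) (n : ℕ) : ℂ := qPoch β q n / qPoch q q n

noncomputable def qBinomialSeries (β q w : ℂ) : ℂ := ∑' n, qBinomialCoeff β q n * w ^ n

lemma one_sub_ne_zero_of_norm_lt_one {R : Type*} [NormedRing R] [NormOneClass R] {x : R}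
    (hx : ‖x‖ < 1) : 1 - x ≠ 0 := by
  rw [sub_ne_zero]
  rintro rfl
  simp at hx

lemma qPoch_succ (a q : ℂ) (n : ℕ) : qPoch a q (n + 1) = qPoch a q n * (1 - a * q ^ n) :=
  prod_range_succ _ _

lemma summable_norm_mul_pow (a : ℂ) {q : ℂ} (hq : ‖q‖ < 1) :
    Summable fun j : ℕ => ‖a * q ^ j‖ := by
  simpa only [norm_mul] using (summable_norm_geometric_of_norm_lt_one hq).mul_left ‖a‖

lemma tendsto_qPoch_qPochInf {q : ℂ} (hq : ‖q‖ < 1) (a : ℂ) :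
    Tendsto (qPoch a q) atTop (𝓝 (qPochInf a q)) := by
  have h := multipliable_one_add_of_summable (f := fun j : ℕ => -(a * q ^ j))
    (by simpa only [norm_neg] using summable_norm_mul_pow a hq)
  simp only [← sub_eq_add_neg] at h
  exact h.hasProd.tendsto_prod_nat

lemma qPochInf_ne_zero {q : ℂ} (hq : ‖q‖ < 1) {a : ℂ} (ha : ‖a‖ < 1) : qPochInf a q ≠ 0 := by
  have h := tprod_one_add_ne_zero_of_summable (f := fun j : ℕ => -(a * q ^ j))
    (fun j => by
      rw [← sub_eq_add_neg]
      refine one_sub_ne_zero_of_norm_lt_one ?_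
      rw [norm_mul, norm_pow]
      exact mul_lt_one_of_nonneg_of_lt_one_left (norm_nonneg a) ha
        (pow_le_one₀ (norm_nonneg q) hq.le))
    (by simpa only [norm_neg] using summable_norm_mul_pow a hq)
  unfold qPochInf
  simpa only [← sub_eq_add_neg] using h

lemma qBinomialCoeff_zero (β q : ℂ) : qBinomialCoeff β q 0 = 1 := by
  simp [qBinomialCoeff, qPoch]

lemma qBinomialCoeff_succ (β q : ℂ) (n : ℕ) :
    qBinomialCoeff β q (n + 1) = qBinomialCoeff β q n * ((1 - β * q ^ n) / (1 - q ^ (n + 1))) := by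
  rw [qBinomialCoeff, qBinomialCoeff, qPoch_succ, qPoch_succ, ← pow_succ', mul_div_mul_comm]

section qBinomial

variable {β q : ℂ}

lemma qBinomialCoeff_succ_mul (hq : ‖q‖ < 1) (n : ℕ) :
    qBinomialCoeff β q (n + 1) * (1 - q ^ (n + 1)) = qBinomialCoeff β q n * (1 - β * q ^ n) := by
  have h : 1 - q ^ (n + 1) ≠ 0 := one_sub_ne_zero_of_norm_lt_one <| by
    rw [norm_pow]; exact pow_lt_one₀ (norm_nonneg q) hq n.succ_ne_zero
  rw [qBinomialCoeff_succ, mul_assoc, div_mul_cancel₀ _ h]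

/-- Ratio test: the ratio of consecutive terms tends to `w`. -/
lemma summable_norm_qBinomialCoeff_mul_pow (hq : ‖q‖ < 1) {w : ℂ} (hw : ‖w‖ < 1) :
    Summable fun n => ‖qBinomialCoeff β q n * w ^ n‖ := by
  obtain ⟨r, hwr, hr⟩ := exists_between hw
  have hratio : Tendsto (fun n : ℕ => (1 - β * q ^ n) / (1 - q ^ (n + 1)) * w) atTop (𝓝 w) := by
    have hcont : ContinuousAt (fun x : ℂ => (1 - β * x) / (1 - q * x) * w) 0 := by
      fun_prop (disch := simp)
    simpa [Function.comp_def, pow_succ'] using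
      hcont.tendsto.comp (tendsto_pow_atTop_nhds_zero_of_norm_lt_one hq)
  refine summable_of_ratio_norm_eventually_le hr ?_
  filter_upwards [hratio.norm.eventually_lt_const hwr] with n hn
  have hstep : qBinomialCoeff β q (n + 1) * w ^ (n + 1)
      = qBinomialCoeff β q n * w ^ n * ((1 - β * q ^ n) / (1 - q ^ (n + 1)) * w) := by
    rw [qBinomialCoeff_succ]; ring
  rw [norm_norm, norm_norm, hstep, norm_mul, mul_comm r]
  gcongr

lemma summable_qBinomialCoeff_mul_pow (hq : ‖q‖ < 1) {w : ℂ} (hw : ‖w‖ < 1) :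
    Summable fun n => qBinomialCoeff β q n * w ^ n :=
  (summable_norm_qBinomialCoeff_mul_pow hq hw).of_norm

lemma qBinomialSeries_functional_eq (hq : ‖q‖ < 1) {w : ℂ} (hw : ‖w‖ < 1) :
    (1 - w) * qBinomialSeries β q w = (1 - β * w) * qBinomialSeries β q (q * w) := by
  have hqw : ‖q * w‖ < 1 := by
    rw [norm_mul]; exact mul_lt_one_of_nonneg_of_lt_one_left (norm_nonneg q) hq hw.le
  have hf := summable_qBinomialCoeff_mul_pow (β := β) hq hw
  have hg := summable_qBinomialCoeff_mul_pow (β := β) hq hqw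
  suffices qBinomialSeries β q w - qBinomialSeries β q (q * w)
      = w * (qBinomialSeries β q w - β * qBinomialSeries β q (q * w)) by
    linear_combination this
  have hdiff : qBinomialSeries β q w - qBinomialSeries β q (q * w)
      = ∑' n, qBinomialCoeff β q n * (1 - q ^ n) * w ^ n := by
    rw [qBinomialSeries, qBinomialSeries, ← hf.tsum_sub hg]
    exact tsum_congr fun n => by ring
  have hdiff' : qBinomialSeries β q w - β * qBinomialSeries β q (q * w)
      = ∑' n, qBinomialCoeff β q n * (1 - β * q ^ n) * w ^ n := by
    rw [qBinomialSeries, qBinomialSeries, ← tsum_mul_left, ← hf.tsum_sub (hg.mul_left β)]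
    exact tsum_congr fun n => by ring
  have hsummable : Summable fun n => qBinomialCoeff β q n * (1 - q ^ n) * w ^ n :=
    (hf.sub hg).congr fun n => by ring
  rw [hdiff, hdiff', hsummable.tsum_eq_zero_add, ← tsum_mul_left]
  simp only [pow_zero, sub_self, mul_zero, zero_mul, zero_add]
  exact tsum_congr fun n => by rw [qBinomialCoeff_succ_mul hq]; ring

lemma qBinomialSeries_mul_qPoch (hq : ‖q‖ < 1) {w : ℂ} (hw : ‖w‖ < 1) (N : ℕ) :
    qBinomialSeries β q w * qPoch w q N = qPoch (β * w) q N * qBinomialSeries β q (q ^ N * w) := by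
  induction N with
  | zero => simp [qPoch]
  | succ N ih =>
    have hqNw : ‖q ^ N * w‖ < 1 := by
      rw [norm_mul, norm_pow]
      exact mul_lt_one_of_nonneg_of_lt_one_right (pow_le_one₀ (norm_nonneg q) hq.le)
        (norm_nonneg w) hw
    have hfe := qBinomialSeries_functional_eq (β := β) hq hqNw
    rw [← mul_assoc q, ← pow_succ'] at hfe
    rw [qPoch_succ, qPoch_succ]
    linear_combination (1 - w * q ^ N) * ih + qPoch (β * w) q N * hfe

/-- Tannery's theorem, dominating `(qᴺw)ⁿ` by `wⁿ`. -/
lemma tendsto_qBinomialSeries_pow_mul (hq : ‖q‖ < 1) {w : ℂ} (hw : ‖w‖ < 1) :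
    Tendsto (fun N : ℕ => qBinomialSeries β q (q ^ N * w)) atTop (𝓝 1) := by
  have hlim : ∑' n, qBinomialCoeff β q n * (0 : ℂ) ^ n = 1 := by
    rw [tsum_eq_single 0 fun n hn => by simp [zero_pow hn]]
    simp [qBinomialCoeff_zero]
  rw [← hlim]
  refine tendsto_tsum_of_dominated_convergence
    (summable_norm_qBinomialCoeff_mul_pow (β := β) hq hw)
    (fun n => ?_) (Eventually.of_forall fun N n => ?_)
  · have h0 : Tendsto (fun N : ℕ => q ^ N * w) atTop (𝓝 0) := by
      simpa using (tendsto_pow_atTop_nhds_zero_of_norm_lt_one hq).mul_const w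
    exact ((h0.pow n).const_mul _)
  · rw [norm_mul, norm_mul, norm_pow, norm_pow, norm_mul, norm_pow]
    gcongr
    exact mul_le_of_le_one_left (norm_nonneg w) (pow_le_one₀ (norm_nonneg q) hq.le)

theorem qBinomialSeries_mul_qPochInf (hq : ‖q‖ < 1) {w : ℂ} (hw : ‖w‖ < 1) :
    qBinomialSeries β q w * qPochInf w q = qPochInf (β * w) q := by
  have hlhs := (tendsto_qPoch_qPochInf hq w).const_mul (qBinomialSeries β q w)
  have hrhs := (tendsto_qPoch_qPochInf hq (β * w)).mul
    (tendsto_qBinomialSeries_pow_mul (β := β) hq hw)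
  rw [mul_one] at hrhs
  exact tendsto_nhds_unique hlhs (hrhs.congr fun N => (qBinomialSeries_mul_qPoch hq hw N).symm)

theorem qBinomialSeries_eq_div (hq : ‖q‖ < 1) {w : ℂ} (hw : ‖w‖ < 1) :
    qBinomialSeries β q w = qPochInf (β * w) q / qPochInf w q := by
  rw [← qBinomialSeries_mul_qPochInf hq hw, mul_div_cancel_right₀ _ (qPochInf_ne_zero hq hw)]

end qBinomial

lemma qUltra_mul_pow (n : ℕ) (β q θ z : ℂ) :
    qUltra n β q θ * z ^ n = ∑ k ∈ range (n + 1),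
      qBinomialCoeff β q k * (Complex.exp (-(Complex.I * θ)) * z) ^ k *
        (qBinomialCoeff β q (n - k) * (Complex.exp (Complex.I * θ) * z) ^ (n - k)) := by
  rw [qUltra, sum_mul]
  refine sum_congr rfl fun k hk => ?_
  have hkn : k ≤ n := Nat.lt_succ_iff.mp (mem_range.mp hk)
  have hexp : Complex.exp (-(Complex.I * θ)) ^ k * Complex.exp (Complex.I * θ) ^ (n - k)
      = Complex.exp (Complex.I * ((n : ℂ) - 2 * (k : ℂ)) * θ) := by
    rw [← Complex.exp_nat_mul, ← Complex.exp_nat_mul, ← Complex.exp_add, Nat.cast_sub hkn]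
    ring_nf
  calc _ = qBinomialCoeff β q k * qBinomialCoeff β q (n - k) *
        (Complex.exp (-(Complex.I * θ)) ^ k * Complex.exp (Complex.I * θ) ^ (n - k)) *
        z ^ (k + (n - k)) := by
          rw [hexp, Nat.add_sub_cancel' hkn, qBinomialCoeff, qBinomialCoeff, div_mul_div_comm]
    _ = _ := by ring

theorem tsum_qUltra_mul_pow {β q θ z : ℂ} (hq : ‖q‖ < 1)
    (h₁ : ‖Complex.exp (Complex.I * θ) * z‖ < 1) (h₂ : ‖Complex.exp (-(Complex.I * θ)) * z‖ < 1) :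
    ∑' n, qUltra n β q θ * z ^ n = qBinomialSeries β q (Complex.exp (-(Complex.I * θ)) * z) *
      qBinomialSeries β q (Complex.exp (Complex.I * θ) * z) := by
  simp_rw [qUltra_mul_pow]
  exact (tsum_mul_tsum_eq_tsum_sum_range_of_summable_norm
    (summable_norm_qBinomialCoeff_mul_pow hq h₂) (summable_norm_qBinomialCoeff_mul_pow hq h₁)).symm

theorem qUltra_generating_function_general (β q z : ℂ) (θ : ℝ)
    (hq : ‖q‖ < 1) (hz : ‖z‖ < 1) :
    ∑' n : ℕ, qUltra n β q (θ : ℂ) * z ^ n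
      = ((∏' j : ℕ, (1 - β * Complex.exp (Complex.I * (θ : ℂ)) * z * q ^ j)) *
          (∏' j : ℕ, (1 - β * Complex.exp (-(Complex.I * (θ : ℂ))) * z * q ^ j))) /
        ((∏' j : ℕ, (1 - Complex.exp (Complex.I * (θ : ℂ)) * z * q ^ j)) *
          (∏' j : ℕ, (1 - Complex.exp (-(Complex.I * (θ : ℂ))) * z * q ^ j))) := by
  have h₁ : ‖Complex.exp (Complex.I * θ) * z‖ < 1 := by
    rwa [norm_mul, Complex.norm_exp_I_mul_ofReal, one_mul]
  have h₂ : ‖Complex.exp (-(Complex.I * θ)) * z‖ < 1 := by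
    rwa [norm_mul, ← mul_neg, ← Complex.ofReal_neg, Complex.norm_exp_I_mul_ofReal, one_mul]
  change _ = qPochInf (β * _ * z) q * qPochInf (β * _ * z) q /
    (qPochInf (_ * z) q * qPochInf (_ * z) q)
  rw [tsum_qUltra_mul_pow hq h₁ h₂, qBinomialSeries_eq_div hq h₁, qBinomialSeries_eq_div hq h₂,
    mul_assoc β, mul_assoc β]
  ring

/-- Generating function for the continuous q-ultraspherical polynomials:
Σ_{n≥0} C_n(cos θ; β|q) zⁿ = (βe^{iθ}z, βe^{−iθ}z; q)_∞ / (e^{iθ}z, e^{−iθ}z; q)_∞. -/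
theorem qUltra_generating_function (β q z : ℂ) (θ : ℝ)
    (hq : ‖q‖ < 1) (hβ : ‖β‖ < 1) (hz : ‖z‖ < 1) :
    ∑' n : ℕ, qUltra n β q (θ : ℂ) * z ^ n
      = ((∏' j : ℕ, (1 - β * Complex.exp (Complex.I * (θ : ℂ)) * z * q ^ j)) *
          (∏' j : ℕ, (1 - β * Complex.exp (-(Complex.I * (θ : ℂ))) * z * q ^ j))) /
        ((∏' j : ℕ, (1 - Complex.exp (Complex.I * (θ : ℂ)) * z * q ^ j)) *
          (∏' j : ℕ, (1 - Complex.exp (-(Complex.I * (θ : ℂ))) * z * q ^ j))) :=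
  qUltra_generating_function_general β q z θ hq hz
end

section
/- Up to scalar multiple, the Laurent polynomial f_λ(y) is the unique Laurent polynomial solution of the q-difference equation t(1−qy) f(q²y) − t^{1/2}(t−qy)(t^{−1/2}q^{λ₁}+t^{1/2}q^{λ₂}) f(qy) + (t²−qy) q^{λ₁+λ₂} f(y) = 0, for generic parameters q, t. -/
open Finset

/-- Coefficient χ_k of the separated polynomial f_λ. -/
noncomputable def chi (q t : ℂ) (l1 l2 k : ℤ) : ℂ :=
  (t⁻¹ ^ 2 * q) ^ (k - l1).toNat *
    (qPoch t q (k - l1).toNat * qPoch (q ^ (-(l2 - l1))) q (k - l1).toNat) /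
    (qPoch q q (k - l1).toNat * qPoch (t⁻¹ * q ^ (1 - (l2 - l1))) q (k - l1).toNat)

/-- The separated polynomial f_λ(y) = Σ_{k=λ₁}^{λ₂} χ_k y^k. -/
noncomputable def fsep (q t : ℂ) (l1 l2 : ℤ) (y : ℂ) : ℂ :=
  ∑ k ∈ Finset.Icc l1 l2, chi q t l1 l2 k * y ^ k

/-! Comparing coefficients of `y ^ k` (legitimate since a Laurent polynomial vanishing on all
`y ≠ 0` is zero) turns the equation into the first-order recurrence
`t (q^k - q^λ₁)(q^k - t q^λ₂) c_k = q (t q^(k-1) - q^λ₁)(q^(k-1) - q^λ₂) c_(k-1)`.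
For generic `q, t` the left factor vanishes only at `k = λ₁` and the right one only at
`k - 1 = λ₂`, so the recurrence propagates zeros downwards from `λ₁` and upwards from `λ₂`,
and on `[λ₁, λ₂]` it determines `c` from `c_λ₁`. The coefficients `χ_k` of `f_λ` satisfy the
same recurrence there, their ratios being exactly the ratios of consecutive factors of the
q-Pochhammer symbols. -/

section LaurentSums

variable {K : Type*} [Field K]

theorem eq_zero_of_forall_sum_mul_zpow_eq_zero [Infinite K] {s : Finset ℤ} {d : ℤ → K}
    (h : ∀ y : K, y ≠ 0 → ∑ k ∈ s, d k * y ^ k = 0) : ∀ k ∈ s, d k = 0 := by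
  obtain ⟨m, hms⟩ := s.bddBelow
  have hm (k) (hk : k ∈ s) : ((k - m).toNat : ℤ) = k - m :=
    Int.toNat_of_nonneg (by linarith [hms hk])
  set p : Polynomial K := ∑ k ∈ s, Polynomial.monomial (k - m).toNat (d k)
  have hp : p = 0 := by
    refine p.eq_zero_of_infinite_isRoot ((Set.finite_singleton 0).infinite_compl.mono ?_)
    intro y (hy : y ≠ 0)
    have heval : p.eval y = (∑ k ∈ s, d k * y ^ k) * y ^ (-m) := by
      simp only [p, Polynomial.eval_finsetSum, Polynomial.eval_monomial, Finset.sum_mul]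
      refine Finset.sum_congr rfl fun k hk => ?_
      rw [← zpow_natCast, hm k hk, zpow_sub₀ hy, div_eq_mul_inv, ← zpow_neg, mul_assoc]
    simp [Polynomial.IsRoot, heval, h y hy]
  intro k hk
  have hcoeff := congrArg (Polynomial.coeff · (k - m).toNat) hp
  simp only [p, Polynomial.finsetSum_coeff, Polynomial.coeff_monomial, Polynomial.coeff_zero] at hcoeff
  rwa [Finset.sum_eq_single_of_mem k hk fun j hj hjk => if_neg fun h => hjk (by
    have := hm j hj; have := hm k hk; omega), if_pos rfl] at hcoeff

theorem coeff_add_coeff_sub_one_eq_zero [Infinite K] {s : Finset ℤ} {a b : ℤ → K}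
    (ha : ∀ k ∉ s, a k = 0) (hb : ∀ k ∉ s, b k = 0)
    (h : ∀ y : K, y ≠ 0 → ∑ k ∈ s, (a k + b k * y) * y ^ k = 0) (k : ℤ) :
    a k + b (k - 1) = 0 := by
  set T := s ∪ s.map (addRightEmbedding 1)
  have hsum (y : K) (hy : y ≠ 0) : ∑ k ∈ T, (a k + b (k - 1)) * y ^ k = 0 := by
    have hshift : ∑ k ∈ s.map (addRightEmbedding 1), b (k - 1) * y ^ k
        = ∑ k ∈ s, b k * y * y ^ k := by
      simp only [Finset.sum_map, addRightEmbedding_apply, add_sub_cancel_right,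
        zpow_add_one₀ hy]
      exact Finset.sum_congr rfl fun _ _ => by ring
    rw [← h y hy]
    simp only [add_mul, Finset.sum_add_distrib]
    congr 1
    · exact (Finset.sum_subset Finset.subset_union_left fun k _ hk => by simp [ha k hk]).symm
    · rw [← hshift]
      refine (Finset.sum_subset Finset.subset_union_right fun k _ hk => ?_).symm
      rw [hb (k - 1) fun h => hk (Finset.mem_map.mpr ⟨k - 1, h, by simp⟩), zero_mul]
  by_cases hk : k ∈ T
  · exact eq_zero_of_forall_sum_mul_zpow_eq_zero hsum k hk
  · rw [ha k fun h => hk (Finset.mem_union_left _ h),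
      hb (k - 1) fun h => hk (Finset.mem_union_right _ (Finset.mem_map.mpr ⟨k - 1, h, by simp⟩)),
      add_zero]

end LaurentSums

section FirstOrderRecurrence

variable {M₀ : Type*} [MulZeroClass M₀] [NoZeroDivisors M₀] {A B c : ℤ → M₀} {m : ℤ}

theorem eq_zero_of_lt_of_recurrence (hrec : ∀ k ≤ m, A k * c k = B (k - 1) * c (k - 1))
    (h0 : A m * c m = 0) (hB : ∀ k < m, B k ≠ 0) : ∀ k < m, c k = 0 := by
  have hstep (k : ℤ) (hk : k ≤ m) (h : A k * c k = 0) : c (k - 1) = 0 := by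
    rw [hrec k hk] at h
    exact (mul_eq_zero.mp h).resolve_left (hB _ (by omega))
  intro k hk
  induction k, Int.le_sub_one_of_lt hk using Int.leInductionDown with
  | base => exact hstep m le_rfl h0
  | pred n hn ih => exact hstep n (by omega) (by rw [ih (by omega), mul_zero])

theorem eq_zero_of_gt_of_recurrence (hrec : ∀ k > m, A k * c k = B (k - 1) * c (k - 1))
    (h0 : B m * c m = 0) (hA : ∀ k > m, A k ≠ 0) : ∀ k > m, c k = 0 := by
  have hstep (k : ℤ) (hk : m < k) (h : B (k - 1) * c (k - 1) = 0) : c k = 0 := by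
    rw [← hrec k hk] at h
    exact (mul_eq_zero.mp h).resolve_left (hA k hk)
  intro k (hk : m + 1 ≤ k)
  induction k, hk using Int.leInduction with
  | base => exact hstep _ (by omega) (by rwa [add_sub_cancel_right])
  | succ n hn ih => exact hstep _ (by omega) (by rw [add_sub_cancel_right, ih, mul_zero])

end FirstOrderRecurrence

section Genericity

variable {G₀ : Type*} [GroupWithZero G₀] {q t : G₀}

theorem zpow_injective_of_pow_ne_one (hq0 : q ≠ 0) (hq : ∀ n : ℕ, 1 ≤ n → q ^ n ≠ 1) :
    Function.Injective (q ^ · : ℤ → G₀) := by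
  have hu : ¬IsOfFinOrder (Units.mk0 q hq0) := by
    rw [← Units.isOfFinOrder_val, Units.val_mk0, isOfFinOrder_iff_pow_eq_one]
    rintro ⟨n, hn, h⟩
    exact hq n hn h
  intro a b hab
  refine injective_zpow_iff_not_isOfFinOrder.mpr hu (Units.ext ?_)
  simpa only [Units.val_zpow_eq_zpow_val, Units.val_mk0] using hab

theorem mul_zpow_ne_zpow (hq0 : q ≠ 0) (ht : ∀ m : ℤ, t ≠ q ^ m) (a b : ℤ) :
    t * q ^ a ≠ q ^ b := by
  intro h
  apply ht (b - a)
  rw [zpow_sub₀ hq0, eq_div_iff (zpow_ne_zero _ hq0), h]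

end Genericity

section SeparatedOperator

variable {K : Type*} [Field K] (q t : K) (l1 l2 : ℤ)

/-- The separated operator maps `y ^ k` to `(diagCoeff k - shiftCoeff k * y) * y ^ k`. -/
def diagCoeff (k : ℤ) : K := t * (q ^ k - q ^ l1) * (q ^ k - t * q ^ l2)

def shiftCoeff (k : ℤ) : K := q * (t * q ^ k - q ^ l1) * (q ^ k - q ^ l2)

variable {q t l1 l2}

theorem diagCoeff_ne_zero (hq0 : q ≠ 0) (ht0 : t ≠ 0) (hq : ∀ n : ℕ, 1 ≤ n → q ^ n ≠ 1)
    (ht : ∀ m : ℤ, t ≠ q ^ m) {k : ℤ} (hk : k ≠ l1) : diagCoeff q t l1 l2 k ≠ 0 :=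
  mul_ne_zero (mul_ne_zero ht0 (sub_ne_zero.mpr ((zpow_injective_of_pow_ne_one hq0 hq).ne hk)))
    (sub_ne_zero.mpr (mul_zpow_ne_zpow hq0 ht l2 k).symm)

theorem shiftCoeff_ne_zero (hq0 : q ≠ 0) (hq : ∀ n : ℕ, 1 ≤ n → q ^ n ≠ 1)
    (ht : ∀ m : ℤ, t ≠ q ^ m) {k : ℤ} (hk : k ≠ l2) : shiftCoeff q t l1 l2 k ≠ 0 :=
  mul_ne_zero (mul_ne_zero hq0 (sub_ne_zero.mpr (mul_zpow_ne_zpow hq0 ht k l1)))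
    (sub_ne_zero.mpr ((zpow_injective_of_pow_ne_one hq0 hq).ne hk))

theorem separated_operator_eq_sum (hq0 : q ≠ 0) {s : K} (hs0 : s ≠ 0) (hs : s ^ 2 = t)
    (c : ℤ →₀ K) (y : K) :
    t * (1 - q * y) * (∑ k ∈ c.support, c k * (q ^ 2 * y) ^ k)
        - s * (t - q * y) * (s⁻¹ * q ^ l1 + s * q ^ l2) *
            (∑ k ∈ c.support, c k * (q * y) ^ k)
        + (t ^ 2 - q * y) * q ^ (l1 + l2) * (∑ k ∈ c.support, c k * y ^ k)
      = ∑ k ∈ c.support,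
          (diagCoeff q t l1 l2 k * c k + -(shiftCoeff q t l1 l2 k * c k) * y) * y ^ k := by
  simp only [Finset.mul_sum, ← Finset.sum_sub_distrib, ← Finset.sum_add_distrib]
  refine Finset.sum_congr rfl fun k _ => ?_
  have hsq : (q ^ 2 * y) ^ k = (q ^ k) ^ 2 * y ^ k := by
    rw [mul_zpow, ← zpow_natCast, ← zpow_natCast, ← zpow_mul, ← zpow_mul, mul_comm _ k]
  rw [hsq, mul_zpow, zpow_add₀ hq0, diagCoeff, shiftCoeff, ← hs]
  field_simp
  ring

end SeparatedOperator

theorem chi_add_one (q t : ℂ) (l1 l2 : ℤ) (n : ℕ) :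
    chi q t l1 l2 (l1 + (n + 1 : ℕ)) = chi q t l1 l2 (l1 + n) *
      (t⁻¹ ^ 2 * q * ((1 - t * q ^ n) * (1 - q ^ (-(l2 - l1)) * q ^ n)) /
        ((1 - q * q ^ n) * (1 - t⁻¹ * q ^ (1 - (l2 - l1)) * q ^ n))) := by
  simp only [chi, add_sub_cancel_left, Int.toNat_natCast, qPoch, Finset.prod_range_succ]
  generalize 1 - t * q ^ n = a, 1 - q ^ (-(l2 - l1)) * q ^ n = b, 1 - q * q ^ n = c,
    1 - t⁻¹ * q ^ (1 - (l2 - l1)) * q ^ n = d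
  ring

theorem diagCoeff_mul_chi {q t : ℂ} {l1 l2 k : ℤ} (hq0 : q ≠ 0) (ht0 : t ≠ 0) (hk : l1 < k)
    (hdiag : diagCoeff q t l1 l2 k ≠ 0) :
    diagCoeff q t l1 l2 k * chi q t l1 l2 k = shiftCoeff q t l1 l2 (k - 1) * chi q t l1 l2 (k - 1) := by
  obtain ⟨n, rfl⟩ : ∃ n : ℕ, k = l1 + (n + 1 : ℕ) := ⟨(k - l1 - 1).toNat, by omega⟩
  rw [show l1 + ((n + 1 : ℕ) : ℤ) - 1 = l1 + n by push_cast; ring, chi_add_one]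
  set num := (1 - t * q ^ n) * (1 - q ^ (-(l2 - l1)) * q ^ n)
  set den := (1 - q * q ^ n) * (1 - t⁻¹ * q ^ (1 - (l2 - l1)) * q ^ n)
  have hdiag_eq : diagCoeff q t l1 l2 (l1 + (n + 1 : ℕ)) = t ^ 2 * q ^ l1 * q ^ l2 * den := by
    simp only [diagCoeff, den, Nat.cast_add, Nat.cast_one, zpow_add₀ hq0, zpow_sub₀ hq0,
      zpow_natCast, zpow_one]
    field_simp
    ring
  have hshift_eq : shiftCoeff q t l1 l2 (l1 + n) = t ^ 2 * q ^ l1 * q ^ l2 * (t⁻¹ ^ 2 * q * num) := by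
    simp only [shiftCoeff, num, zpow_add₀ hq0, zpow_sub₀ hq0, zpow_neg, zpow_natCast]
    field_simp
    ring
  have hden : den ≠ 0 := right_ne_zero_of_mul (hdiag_eq ▸ hdiag)
  rw [hdiag_eq, hshift_eq]
  field_simp

theorem diagCoeff_mul_eq_of_separated_eq {K : Type*} [Field K] [Infinite K] {q t s : K} {l1 l2 : ℤ}
    (hq0 : q ≠ 0) (hs0 : s ≠ 0) (hs : s ^ 2 = t) {c : ℤ →₀ K}
    (heq : ∀ y : K, y ≠ 0 →
      t * (1 - q * y) * (∑ k ∈ c.support, c k * (q ^ 2 * y) ^ k)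
        - s * (t - q * y) * (s⁻¹ * q ^ l1 + s * q ^ l2) *
            (∑ k ∈ c.support, c k * (q * y) ^ k)
        + (t ^ 2 - q * y) * q ^ (l1 + l2) * (∑ k ∈ c.support, c k * y ^ k) = 0) (k : ℤ) :
    diagCoeff q t l1 l2 k * c k = shiftCoeff q t l1 l2 (k - 1) * c (k - 1) := by
  have h := coeff_add_coeff_sub_one_eq_zero (s := c.support)
    (a := fun k => diagCoeff q t l1 l2 k * c k) (b := fun k => -(shiftCoeff q t l1 l2 k * c k))
    (fun k hk => by simp [Finsupp.notMem_support_iff.mp hk])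
    (fun k hk => by simp [Finsupp.notMem_support_iff.mp hk])
    (fun y hy => separated_operator_eq_sum hq0 hs0 hs c y ▸ heq y hy) k
  linear_combination h

theorem sum_support_eq_mul_sum_Icc {K : Type*} [Field K] {c : ℤ →₀ K} {χ : ℤ → K} {a : K}
    {l1 l2 : ℤ} (hout : ∀ k ∉ Finset.Icc l1 l2, c k = 0)
    (hin : ∀ k ∈ Finset.Icc l1 l2, c k = a * χ k) (y : K) :
    ∑ k ∈ c.support, c k * y ^ k = a * ∑ k ∈ Finset.Icc l1 l2, χ k * y ^ k := by
  have hsupp : c.support ⊆ Finset.Icc l1 l2 := fun k hk =>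
    not_not.mp fun h => Finsupp.mem_support_iff.mp hk (hout k h)
  rw [Finset.mul_sum, Finset.sum_subset hsupp fun k _ hk => by
    rw [Finsupp.notMem_support_iff.mp hk, zero_mul]]
  exact Finset.sum_congr rfl fun k hk => by rw [hin k hk, mul_assoc]

theorem chi_self (q t : ℂ) (l1 l2 : ℤ) : chi q t l1 l2 l1 = 1 := by
  simp [chi, qPoch]

/-- Up to scalar multiple, f_λ is the unique Laurent polynomial solution of the
separated q-difference equation, for generic parameters q (not a root of unity)
and t (not an integer power of q). -/
theorem separated_equation_unique_laurent_solution (q t s : ℂ)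
    (hq0 : q ≠ 0) (ht0 : t ≠ 0) (hs : s ^ 2 = t)
    (hq : ∀ n : ℕ, 1 ≤ n → q ^ n ≠ 1) (ht : ∀ m : ℤ, t ≠ q ^ m)
    (l1 l2 : ℤ) (hl : l1 ≤ l2) (c : ℤ →₀ ℂ)
    (heq : ∀ y : ℂ, y ≠ 0 →
      t * (1 - q * y) * (∑ k ∈ c.support, c k * (q ^ 2 * y) ^ k)
        - s * (t - q * y) * (s⁻¹ * q ^ l1 + s * q ^ l2) *
            (∑ k ∈ c.support, c k * (q * y) ^ k)
        + (t ^ 2 - q * y) * q ^ (l1 + l2) * (∑ k ∈ c.support, c k * y ^ k) = 0) :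
    ∃ A : ℂ, ∀ y : ℂ, y ≠ 0 →
      (∑ k ∈ c.support, c k * y ^ k) = A * fsep q t l1 l2 y := by
  have hs0 : s ≠ 0 := by
    rintro rfl
    exact ht0 (by simpa using hs.symm)
  have hrec := diagCoeff_mul_eq_of_separated_eq hq0 hs0 hs heq
  have hdiag (k : ℤ) (hk : k ≠ l1) := diagCoeff_ne_zero (l2 := l2) hq0 ht0 hq ht hk
  have hshift (k : ℤ) (hk : k ≠ l2) := shiftCoeff_ne_zero (l1 := l1) hq0 hq ht hk
  have hbelow : ∀ k < l1, c k = 0 := eq_zero_of_lt_of_recurrence (fun k _ => hrec k)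
    (by simp [diagCoeff]) (fun k hk => hshift k (by omega))
  have habove : ∀ k > l2, c k = 0 := eq_zero_of_gt_of_recurrence (fun k _ => hrec k)
    (by simp [shiftCoeff]) (fun k hk => hdiag k (by omega))
  have hmiddle : ∀ k > l1, c k - c l1 * chi q t l1 l2 k = 0 :=
    eq_zero_of_gt_of_recurrence (fun k hk => by
      rw [mul_sub, mul_sub, hrec, mul_left_comm, diagCoeff_mul_chi hq0 ht0 hk (hdiag k hk.ne')]
      ring) (by simp [chi_self]) (fun k hk => hdiag k hk.ne')
  refine ⟨c l1, fun y _ => sum_support_eq_mul_sum_Icc (fun k hk => ?_) (fun k hk => ?_) y⟩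
  · rw [Finset.mem_Icc, not_and_or, not_le, not_le] at hk
    exact hk.elim (hbelow k) (habove k)
  · obtain rfl | hk1 := eq_or_lt_of_le (Finset.mem_Icc.mp hk).1
    · rw [chi_self, mul_one]
    · exact sub_eq_zero.mp (hmiddle k hk1)
end

section
/- The operators N₁ and N₂ commute: N₁N₂ = N₂N₁, where N₁ = −[x₂(ξ−x₁)/(ξ(x₁−x₂))]T_{q,x₁} + [x₁(ξ−x₂)/(ξ(x₁−x₂))]T_{q,x₂} and N₂ = −[(ξ−x₁)/(x₁−x₂)]T_{q,x₁} + [(ξ−x₂)/(x₁−x₂)]T_{q,x₂}, as operators on rational functions (or on symmetric Laurent polynomials) in x₁, x₂. -/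
/-- The operator N₁ = −[x₂(ξ−x₁)/(ξ(x₁−x₂))]T_{q,x₁} + [x₁(ξ−x₂)/(ξ(x₁−x₂))]T_{q,x₂}. -/
noncomputable def N1op (q ξ : ℂ) (f : ℂ → ℂ → ℂ) : ℂ → ℂ → ℂ := fun x1 x2 =>
  -(x2 * (ξ - x1) / (ξ * (x1 - x2))) * f (q * x1) x2
    + x1 * (ξ - x2) / (ξ * (x1 - x2)) * f x1 (q * x2)

/-- The operator N₂ = −[(ξ−x₁)/(x₁−x₂)]T_{q,x₁} + [(ξ−x₂)/(x₁−x₂)]T_{q,x₂}. -/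
noncomputable def N2op (q ξ : ℂ) (f : ℂ → ℂ → ℂ) : ℂ → ℂ → ℂ := fun x1 x2 =>
  -((ξ - x1) / (x1 - x2)) * f (q * x1) x2 + (ξ - x2) / (x1 - x2) * f x1 (q * x2)

set_option maxHeartbeats 2000000 in
/-- The operators N₁ and N₂ commute (pointwise, on functions of x₁, x₂, away from
the singular set where denominators vanish). -/
theorem N1op_N2op_commute (q ξ : ℂ) (hq : q ≠ 0) (hξ : ξ ≠ 0) (f : ℂ → ℂ → ℂ)
    (x1 x2 : ℂ) (h12 : x1 ≠ x2) (hq12 : q * x1 ≠ x2) (h1q2 : x1 ≠ q * x2) :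
    N1op q ξ (N2op q ξ f) x1 x2 = N2op q ξ (N1op q ξ f) x1 x2 := by
  simp only [N1op, N2op]
  have h1 : x1 - x2 ≠ 0 := sub_ne_zero.mpr h12
  have h2 : q * x1 - x2 ≠ 0 := sub_ne_zero.mpr hq12
  have h3 : x1 - q * x2 ≠ 0 := sub_ne_zero.mpr h1q2
  set a := f (q * (q * x1)) x2 with ha
  set b := f (q * x1) (q * x2) with hb
  set c := f x1 (q * (q * x2)) with hc
  have hD : ξ * (x1 - x2) * ((q * x1 - x2) * (x1 - q * x2)) ≠ 0 :=
    mul_ne_zero (mul_ne_zero hξ h1) (mul_ne_zero h2 h3)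
  apply mul_left_cancel₀ hD
  field_simp
  have h2' : x1 * q - x2 ≠ 0 := by rwa [mul_comm] at h2
  have h3' : x1 - x2 * q ≠ 0 := by rwa [mul_comm x2 q]
  field_simp
  ring
end

section
/- The functions a_j(u) = (t²−u)(ξ−x_j)(ξu−x_{3−j}) / [(1−u)(tξ−x_j)(ξu−tx_{3−j})], j = 1,2, satisfy the identity t(1−y) a₁(y) a₂(y) − t^{1/2}(t−y)[v₁₂ a₂(y) + v₂₁ a₁(y)] + (t²−y) = 0 for all y, where v₁₂ = (t^{1/2}x₁−t^{−1/2}x₂)/(x₁−x₂) and v₂₁ = (t^{1/2}x₂−t^{−1/2}x₁)/(x₂−x₁). -/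
set_option maxHeartbeats 4000000


/-- The classical separation identity for the 2-particle trigonometric
Ruijsenaars model:
t(1−y) a₁(y) a₂(y) − t^{1/2}(t−y)[v₁₂ a₂(y) + v₂₁ a₁(y)] + (t²−y) = 0, with
a_j(y) = (t²−y)(ξ−x_j)(ξy−x_{3−j}) / [(1−y)(tξ−x_j)(ξy−tx_{3−j})],
v₁₂ = (t^{1/2}x₁−t^{−1/2}x₂)/(x₁−x₂), v₂₁ = (t^{1/2}x₂−t^{−1/2}x₁)/(x₂−x₁),
and s = t^{1/2}. -/
theorem ruijsenaars_separation_identity (t s ξ x1 x2 y : ℂ)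
    (hs : s ^ 2 = t) (hs0 : s ≠ 0)
    (h12 : x1 ≠ x2) (hy : y ≠ 1) (h1 : t * ξ ≠ x1) (h2 : t * ξ ≠ x2)
    (h3 : ξ * y ≠ t * x1) (h4 : ξ * y ≠ t * x2) :
    t * (1 - y) *
        ((t ^ 2 - y) * (ξ - x1) * (ξ * y - x2) /
          ((1 - y) * (t * ξ - x1) * (ξ * y - t * x2))) *
        ((t ^ 2 - y) * (ξ - x2) * (ξ * y - x1) /
          ((1 - y) * (t * ξ - x2) * (ξ * y - t * x1)))
      - s * (t - y) *
          ((s * x1 - s⁻¹ * x2) / (x1 - x2) *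
              ((t ^ 2 - y) * (ξ - x2) * (ξ * y - x1) /
                ((1 - y) * (t * ξ - x2) * (ξ * y - t * x1)))
            + (s * x2 - s⁻¹ * x1) / (x2 - x1) *
              ((t ^ 2 - y) * (ξ - x1) * (ξ * y - x2) /
                ((1 - y) * (t * ξ - x1) * (ξ * y - t * x2))))
      + (t ^ 2 - y) = 0 := by
  have hy' : (1:ℂ) - y ≠ 0 := sub_ne_zero.mpr (fun h => hy (h.symm))
  have h1' : t * ξ - x1 ≠ 0 := sub_ne_zero.mpr h1
  have h2' : t * ξ - x2 ≠ 0 := sub_ne_zero.mpr h2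
  have h3' : ξ * y - t * x1 ≠ 0 := sub_ne_zero.mpr h3
  have h4' : ξ * y - t * x2 ≠ 0 := sub_ne_zero.mpr h4
  have h12' : x1 - x2 ≠ 0 := sub_ne_zero.mpr h12
  have h21' : x2 - x1 ≠ 0 := sub_ne_zero.mpr h12.symm
  subst hs
  field_simp
  have h3'' : y * ξ - s ^ 2 * x1 ≠ 0 := by rwa [mul_comm y ξ]
  have h4'' : y * ξ - s ^ 2 * x2 ≠ 0 := by rwa [mul_comm y ξ]
  field_simp
  ring
end
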